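/- Fix δ with 0 < δ < π/2, let I = [−2π, 2π] and I_δ = [−2π, −2π+δ) ∪ (−π−δ, −π+δ) ∪ (π−δ, π+δ) ∪ (2π−δ, 2π]. Then sup_{ω ∈ I ∖ I_δ} | M_m(ω/2 + π) − 2π Ψ̂(ω)² | → 0 as m → ∞; equivalently, (1/√(2π)) |H_m(ω/2 + π)| converges uniformly on I ∖ I_δ to Ψ̂(ω) as m → ∞. -/
import Mathlib


open MeasureTheory Filter Real
open scoped Topology

/-- `c_m = (∫_0^π sin^{2m-1} u du)⁻¹`. -/
noncomputable def cm (m : ℕ) : ℝ :=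
  (∫ u in (0:ℝ)..Real.pi, Real.sin u ^ (2 * m - 1))⁻¹

/-- `M_m(ω) = 1 - c_m ∫_0^ω sin^{2m-1} u du`, i.e. `|H_m(ω)|²` for the Daubechies filter. -/
noncomputable def Mm (m : ℕ) (ω : ℝ) : ℝ :=
  1 - cm m * ∫ u in (0:ℝ)..ω, Real.sin u ^ (2 * m - 1)

/-- `Ψ̂(ω) = (1/√(2π)) (χ_{[-2π,-π]}(ω) + χ_{[π,2π]}(ω))`. -/
noncomputable def PsiHat (ω : ℝ) : ℝ :=
  (1 / Real.sqrt (2 * Real.pi)) *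
    ((Set.Icc (-(2 * Real.pi)) (-Real.pi)).indicator (fun _ => (1 : ℝ)) ω +
     (Set.Icc Real.pi (2 * Real.pi)).indicator (fun _ => (1 : ℝ)) ω)

open Real in
lemma sinpow_int (n : ℕ) (a b : ℝ) :
    IntervalIntegrable (fun u => Real.sin u ^ n) volume a b :=
  (Real.continuous_sin.pow n).intervalIntegrable a b

lemma integ_nonneg_sin (n : ℕ) {a b : ℝ} (h0 : 0 ≤ a) (hab : a ≤ b) (hb : b ≤ π) :
    0 ≤ ∫ u in a..b, Real.sin u ^ n :=
  intervalIntegral.integral_nonneg hab fun u hu =>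
    pow_nonneg (Real.sin_nonneg_of_nonneg_of_le_pi (h0.trans hu.1) (hu.2.trans hb)) n

lemma cm_pos (m : ℕ) : 0 < cm m := inv_pos.mpr (integral_sin_pow_pos _)

lemma cm_mul (m : ℕ) : cm m * ∫ u in (0:ℝ)..π, Real.sin u ^ (2*m-1) = 1 :=
  inv_mul_cancel₀ (ne_of_gt (integral_sin_pow_pos _))

lemma bndA (m : ℕ) {x q : ℝ} (hx0 : 0 ≤ x) (hx2 : x ≤ π/2) (hq : Real.sin x ≤ q) :
    |Mm m x - 1| ≤ cm m * ((π/2) * q ^ (2*m-1)) := by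
  have hπ := Real.pi_pos
  set n := 2*m-1 with hn
  have hsx : 0 ≤ Real.sin x := Real.sin_nonneg_of_nonneg_of_le_pi hx0 (by linarith)
  have hq0 : 0 ≤ q := hsx.trans hq
  have hI0 : 0 ≤ ∫ u in (0:ℝ)..x, Real.sin u ^ n := integ_nonneg_sin n le_rfl hx0 (by linarith)
  have hIq : ∫ u in (0:ℝ)..x, Real.sin u ^ n ≤ (π/2) * q ^ n := by
    have h1 : ∀ u ∈ Set.Icc (0:ℝ) x, Real.sin u ^ n ≤ q ^ n := by
      intro u hu
      have hsu : 0 ≤ Real.sin u :=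
        Real.sin_nonneg_of_nonneg_of_le_pi hu.1 (by linarith [hu.2])
      have : Real.sin u ≤ q :=
        (Real.sin_le_sin_of_le_of_le_pi_div_two (by linarith [hu.1]) hx2 hu.2).trans hq
      exact pow_le_pow_left₀ hsu this n
    calc ∫ u in (0:ℝ)..x, Real.sin u ^ n
        ≤ ∫ _ in (0:ℝ)..x, q ^ n :=
          intervalIntegral.integral_mono_on hx0 (sinpow_int n 0 x)
            intervalIntegrable_const h1
      _ = x * q ^ n := by simp
      _ ≤ (π/2) * q ^ n := mul_le_mul_of_nonneg_right hx2 (pow_nonneg hq0 n)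
  have heq : Mm m x - 1 = -(cm m * ∫ u in (0:ℝ)..x, Real.sin u ^ n) := by
    simp [Mm, hn]
  rw [heq, abs_neg, abs_of_nonneg (mul_nonneg (cm_pos m).le hI0)]
  exact mul_le_mul_of_nonneg_left hIq (cm_pos m).le

lemma bndB (m : ℕ) {x q : ℝ} (hx2 : π/2 ≤ x) (hxπ : x ≤ π) (hq : Real.sin x ≤ q) :
    |Mm m x| ≤ cm m * ((π/2) * q ^ (2*m-1)) := by
  have hπ := Real.pi_pos
  set n := 2*m-1 with hn
  have hsx : 0 ≤ Real.sin x := Real.sin_nonneg_of_nonneg_of_le_pi (by linarith) hxπ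
  have hq0 : 0 ≤ q := hsx.trans hq
  have split : (∫ u in (0:ℝ)..x, Real.sin u ^ n) + ∫ u in x..π, Real.sin u ^ n
      = ∫ u in (0:ℝ)..π, Real.sin u ^ n :=
    intervalIntegral.integral_add_adjacent_intervals (sinpow_int n 0 x) (sinpow_int n x π)
  have key := cm_mul m
  rw [← hn] at key
  have heq : Mm m x = cm m * ∫ u in x..π, Real.sin u ^ n := by
    rw [Mm, ← hn]
    linear_combination -(cm m) * split - key
  have hI0 : 0 ≤ ∫ u in x..π, Real.sin u ^ n := integ_nonneg_sin n (by linarith) hxπ le_rfl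
  have hIq : ∫ u in x..π, Real.sin u ^ n ≤ (π/2) * q ^ n := by
    have h1 : ∀ u ∈ Set.Icc x π, Real.sin u ^ n ≤ q ^ n := by
      intro u hu
      have hsu : 0 ≤ Real.sin u :=
        Real.sin_nonneg_of_nonneg_of_le_pi (by linarith [hu.1]) hu.2
      have h2 : Real.sin u ≤ Real.sin x := by
        rw [← Real.sin_pi_sub u, ← Real.sin_pi_sub x]
        exact Real.sin_le_sin_of_le_of_le_pi_div_two (by linarith [hu.2]) (by linarith)
          (by linarith [hu.1])
      exact pow_le_pow_left₀ hsu (h2.trans hq) n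
    calc ∫ u in x..π, Real.sin u ^ n
        ≤ ∫ _ in x..π, q ^ n :=
          intervalIntegral.integral_mono_on hxπ (sinpow_int n x π)
            intervalIntegrable_const h1
      _ = (π - x) * q ^ n := by simp
      _ ≤ (π/2) * q ^ n := mul_le_mul_of_nonneg_right (by linarith) (pow_nonneg hq0 n)
  rw [heq, abs_of_nonneg (mul_nonneg (cm_pos m).le hI0)]
  exact mul_le_mul_of_nonneg_left hIq (cm_pos m).le

lemma shift_Mm (m : ℕ) (hm : 1 ≤ m) (x : ℝ) : Mm m x = 1 - Mm m (x - π) := by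
  set n := 2*m-1 with hn
  have hodd : Odd n := ⟨m - 1, by omega⟩
  have hcomp : (∫ v in (0:ℝ)..(x - π), Real.sin (π + v) ^ n)
      = ∫ u in π..x, Real.sin u ^ n := by
    have := intervalIntegral.integral_comp_add_left (a := (0:ℝ)) (b := x - π)
      (fun u => Real.sin u ^ n) π
    simpa using this
  have h2 : (∫ u in π..x, Real.sin u ^ n)
      = -∫ v in (0:ℝ)..(x - π), Real.sin v ^ n := by
    rw [← hcomp]
    have : ∀ v : ℝ, Real.sin (π + v) ^ n = -(Real.sin v ^ n) := fun v => by
      rw [add_comm, Real.sin_add_pi, hodd.neg_pow]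
    simp only [this]
    exact intervalIntegral.integral_neg
  have split : (∫ u in (0:ℝ)..π, Real.sin u ^ n) + ∫ u in π..x, Real.sin u ^ n
      = ∫ u in (0:ℝ)..x, Real.sin u ^ n :=
    intervalIntegral.integral_add_adjacent_intervals (sinpow_int n 0 π) (sinpow_int n π x)
  have key := cm_mul m
  rw [← hn] at key
  rw [Mm, Mm, ← hn]
  linear_combination (cm m) * split - (cm m) * h2 - key

lemma lower_bound (n : ℕ) {δ : ℝ} (hδ0 : 0 < δ) (hδ : δ < π/2) :
    δ/2 * Real.cos (δ/4) ^ n ≤ ∫ u in (0:ℝ)..π, Real.sin u ^ n := by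
  have hπ := Real.pi_pos
  set a := π/2 - δ/4 with ha
  set b := π/2 + δ/4 with hb
  have h0a : (0:ℝ) ≤ a := by rw [ha]; linarith
  have hab : a ≤ b := by rw [ha, hb]; linarith
  have hbπ : b ≤ π := by rw [hb]; linarith
  have s1 : (∫ u in (0:ℝ)..a, Real.sin u ^ n) + ∫ u in a..π, Real.sin u ^ n
      = ∫ u in (0:ℝ)..π, Real.sin u ^ n :=
    intervalIntegral.integral_add_adjacent_intervals (sinpow_int n 0 a) (sinpow_int n a π)
  have s2 : (∫ u in a..b, Real.sin u ^ n) + ∫ u in b..π, Real.sin u ^ n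
      = ∫ u in a..π, Real.sin u ^ n :=
    intervalIntegral.integral_add_adjacent_intervals (sinpow_int n a b) (sinpow_int n b π)
  have n1 : 0 ≤ ∫ u in (0:ℝ)..a, Real.sin u ^ n :=
    integ_nonneg_sin n le_rfl h0a (by linarith)
  have n2 : 0 ≤ ∫ u in b..π, Real.sin u ^ n :=
    integ_nonneg_sin n (by linarith) hbπ le_rfl
  have hmid : δ/2 * Real.cos (δ/4) ^ n ≤ ∫ u in a..b, Real.sin u ^ n := by
    have hc0 : 0 ≤ Real.cos (δ/4) :=
      Real.cos_nonneg_of_mem_Icc ⟨by linarith, by linarith⟩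
    have h1 : ∀ u ∈ Set.Icc a b, Real.cos (δ/4) ^ n ≤ Real.sin u ^ n := by
      intro u hu
      have habs : |π/2 - u| ≤ δ/4 := by
        rw [abs_le]
        constructor <;> [skip; skip] <;>
          · have h1 := hu.1; have h2 := hu.2; rw [ha] at h1; rw [hb] at h2; linarith
      have : Real.cos (δ/4) ≤ Real.sin u := by
        rw [← Real.cos_pi_div_two_sub u, ← Real.cos_abs (π/2 - u)]
        exact Real.cos_le_cos_of_nonneg_of_le_pi (abs_nonneg _) (by linarith) habs
      exact pow_le_pow_left₀ hc0 this n
    calc δ/2 * Real.cos (δ/4) ^ n = (b - a) * Real.cos (δ/4) ^ n := by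
          rw [ha, hb]; ring
      _ = ∫ _ in a..b, Real.cos (δ/4) ^ n := by simp
      _ ≤ ∫ u in a..b, Real.sin u ^ n :=
          intervalIntegral.integral_mono_on hab intervalIntegrable_const (sinpow_int n a b) h1
  linarith


lemma psi_sq_left {ω : ℝ} (h1 : -(2*π) ≤ ω) (h2 : ω ≤ -π) : 2*π*PsiHat ω ^ 2 = 1 := by
  have hπ := Real.pi_pos
  have h2π : (0:ℝ) < 2*π := by linarith
  rw [PsiHat, Set.indicator_of_mem (Set.mem_Icc.mpr ⟨h1, h2⟩), Set.indicator_of_notMem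
    (fun h => by have := (Set.mem_Icc.mp h).1; linarith)]
  have hs : Real.sqrt (2*π) ^ 2 = 2*π := Real.sq_sqrt h2π.le
  rw [add_zero, mul_one, div_pow, one_pow, hs, mul_one_div, div_self h2π.ne']

lemma psi_sq_right {ω : ℝ} (h1 : π ≤ ω) (h2 : ω ≤ 2*π) : 2*π*PsiHat ω ^ 2 = 1 := by
  have hπ := Real.pi_pos
  have h2π : (0:ℝ) < 2*π := by linarith
  rw [PsiHat, Set.indicator_of_notMem
    (fun h => by have := (Set.mem_Icc.mp h).2; linarith),
    Set.indicator_of_mem (Set.mem_Icc.mpr ⟨h1, h2⟩)]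
  have hs : Real.sqrt (2*π) ^ 2 = 2*π := Real.sq_sqrt h2π.le
  rw [zero_add, mul_one, div_pow, one_pow, hs, mul_one_div, div_self h2π.ne']

lemma psi_sq_mid {ω : ℝ} (h1 : -π < ω) (h2 : ω < π) : 2*π*PsiHat ω ^ 2 = 0 := by
  rw [PsiHat, Set.indicator_of_notMem (fun h => by have := (Set.mem_Icc.mp h).2; linarith),
    Set.indicator_of_notMem (fun h => by have := (Set.mem_Icc.mp h).1; linarith)]
  ring

theorem stmt6 (δ : ℝ) (hδ0 : 0 < δ) (hδ : δ < Real.pi / 2) :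
    TendstoUniformlyOn (fun (m : ℕ) (ω : ℝ) => Mm m (ω / 2 + Real.pi))
      (fun ω => 2 * Real.pi * PsiHat ω ^ 2) atTop
      (Set.Icc (-(2 * Real.pi)) (2 * Real.pi) \
        (Set.Ico (-(2 * Real.pi)) (-(2 * Real.pi) + δ) ∪
         Set.Ioo (-Real.pi - δ) (-Real.pi + δ) ∪
         Set.Ioo (Real.pi - δ) (Real.pi + δ) ∪
         Set.Ioc (2 * Real.pi - δ) (2 * Real.pi))) := by
  have hπ := Real.pi_pos
  set q := Real.cos (δ/2) with hqdef
  set p := Real.cos (δ/4) with hpdef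
  have hp0 : 0 < p := Real.cos_pos_of_mem_Ioo ⟨by linarith, by linarith⟩
  have hq0 : 0 ≤ q := Real.cos_nonneg_of_mem_Icc ⟨by linarith, by linarith⟩
  have hqp : q < p := Real.cos_lt_cos_of_nonneg_of_le_pi (by linarith) (by linarith) (by linarith)
  have hr1 : q / p < 1 := (div_lt_one hp0).mpr hqp
  have hr0 : 0 ≤ q / p := div_nonneg hq0 hp0.le
  have main : ∀ m : ℕ, 1 ≤ m → ∀ ω ∈ (Set.Icc (-(2 * Real.pi)) (2 * Real.pi) \
        (Set.Ico (-(2 * Real.pi)) (-(2 * Real.pi) + δ) ∪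
         Set.Ioo (-Real.pi - δ) (-Real.pi + δ) ∪
         Set.Ioo (Real.pi - δ) (Real.pi + δ) ∪
         Set.Ioc (2 * Real.pi - δ) (2 * Real.pi))),
      |Mm m (ω/2 + π) - 2*π*PsiHat ω ^ 2| ≤ (π/δ) * (q/p)^(2*m-1) := by
    intro m hm ω hω
    obtain ⟨hI, hN⟩ := hω
    rw [Set.mem_Icc] at hI
    simp only [Set.mem_union, Set.mem_Ico, Set.mem_Ioo, Set.mem_Ioc, not_or, not_and,
      not_lt, not_le] at hN
    have hcm : cm m * ((π/2) * q^(2*m-1)) ≤ (π/δ) * (q/p)^(2*m-1) := by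
      have hlow := lower_bound (2*m-1) hδ0 hδ
      have hcm_le : cm m ≤ (δ/2 * p^(2*m-1))⁻¹ := by
        rw [cm]; exact inv_anti₀ (by positivity) hlow
      calc cm m * ((π/2) * q^(2*m-1))
          ≤ (δ/2 * p^(2*m-1))⁻¹ * ((π/2) * q^(2*m-1)) :=
            mul_le_mul_of_nonneg_right hcm_le (by positivity)
        _ = (π/δ) * (q/p)^(2*m-1) := by
            rw [div_pow]
            field_simp
    have hA : -(2*π) + δ ≤ ω := hN.1.1.1 hI.1
    rcases le_or_gt ω (-π - δ) with hL | hgt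
    · -- left interval
      rw [psi_sq_left hI.1 (by linarith)]
      have hsin : Real.sin (ω/2 + π) ≤ q := by
        have h2 : Real.sin (ω/2 + π) ≤ Real.sin (π/2 - δ/2) :=
          Real.sin_le_sin_of_le_of_le_pi_div_two (by linarith) (by linarith) (by linarith)
        rwa [Real.sin_pi_div_two_sub] at h2
      exact (bndA m (by linarith) (by linarith) hsin).trans hcm
    · have hB : -π + δ ≤ ω := hN.1.1.2 hgt
      rcases le_or_gt ω (π - δ) with hM | hgt2
      · -- middle interval
        rw [psi_sq_mid (by linarith) (by linarith), sub_zero]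
        rcases le_or_gt ω 0 with h0 | h0
        · -- x ∈ [π/2 + δ/2, π]
          have hsin : Real.sin (ω/2 + π) ≤ q := by
            rw [← Real.sin_pi_sub]
            have h2 : Real.sin (π - (ω/2 + π)) ≤ Real.sin (π/2 - δ/2) :=
              Real.sin_le_sin_of_le_of_le_pi_div_two (by linarith) (by linarith) (by linarith)
            rwa [Real.sin_pi_div_two_sub] at h2
          exact (bndB m (by linarith) (by linarith) hsin).trans hcm
        · -- x ∈ (π, 3π/2 - δ/2]
          rw [shift_Mm m hm, show ω/2 + π - π = ω/2 by ring, abs_sub_comm]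
          have hsin : Real.sin (ω/2) ≤ q := by
            have h2 : Real.sin (ω/2) ≤ Real.sin (π/2 - δ/2) :=
              Real.sin_le_sin_of_le_of_le_pi_div_two (by linarith) (by linarith) (by linarith)
            rwa [Real.sin_pi_div_two_sub] at h2
          exact (bndA m (by linarith) (by linarith) hsin).trans hcm
      · -- right interval
        have hC : π + δ ≤ ω := hN.1.2 hgt2
        have hD : ω ≤ 2*π - δ := by
          by_contra h
          push_neg at h
          exact absurd hI.2 (not_le.mpr (hN.2 h))
        rw [psi_sq_right (by linarith) hI.2, shift_Mm m hm,
          show ω/2 + π - π = ω/2 by ring,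
          show 1 - Mm m (ω/2) - 1 = -(Mm m (ω/2)) by ring, abs_neg]
        have hsin : Real.sin (ω/2) ≤ q := by
          rw [← Real.sin_pi_sub]
          have h2 : Real.sin (π - ω/2) ≤ Real.sin (π/2 - δ/2) :=
            Real.sin_le_sin_of_le_of_le_pi_div_two (by linarith) (by linarith) (by linarith)
          rwa [Real.sin_pi_div_two_sub] at h2
        exact (bndB m (by linarith) (by linarith) hsin).trans hcm
  have hT : Tendsto (fun m : ℕ => (π/δ) * (q/p)^(2*m-1)) atTop (𝓝 0) := by
    have h1 : Tendsto (fun k : ℕ => (π/δ) * (q/p)^k) atTop (𝓝 ((π/δ) * 0)) :=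
      (tendsto_pow_atTop_nhds_zero_of_lt_one hr0 hr1).const_mul _
    rw [mul_zero] at h1
    exact h1.comp (tendsto_atTop_atTop.mpr fun b => ⟨b + 1, fun a ha => by omega⟩)
  rw [Metric.tendstoUniformlyOn_iff]
  intro ε hε
  filter_upwards [(tendsto_order.1 hT).2 ε hε, eventually_ge_atTop 1] with m h1 h2 ω hω
  rw [Real.dist_eq, abs_sub_comm]
  exact lt_of_le_of_lt (main m h2 ω hω) h1
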